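/- arXiv:1810.12079 — 3 statements merged into one kernel-verified Lean document; each statement's English description precedes it below -/
import Mathlib

section
/- For each Mathias condition (s,A), let U_{(s,A)} be the set of all restrictions χ_a^n ↾ k, where a ranges over finite sets with s ⊆ a ⊆ s ∪ A, k ≤ n < ω, and χ_a^n denotes the characteristic function of a on {0,…,n−1}. Then (s,A) ≤ (t,B) in Mathias forcing if and only if U_{(s,A)} ⊆ U_{(t,B)}. -/
/-- A Mathias condition: a finite set `s`, an infinite set `A`, `max s < min A`. -/
def IsMathiasCond (s : Finset ℕ) (A : Set ℕ) : Prop :=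
  A.Infinite ∧ ∀ m ∈ s, ∀ n ∈ A, m < n

/-- The order of Mathias forcing: `(s,A) ≤ (t,B)` iff `t ⊆ s`, `A ⊆ B` and `s ∖ t ⊆ B`. -/
def MathiasLe (s : Finset ℕ) (A : Set ℕ) (t : Finset ℕ) (B : Set ℕ) : Prop :=
  t ⊆ s ∧ A ⊆ B ∧ ((s : Set ℕ) \ (t : Set ℕ)) ⊆ B

/-- `χ_a^n`: the characteristic function of the finite set `a` on `{0,…,n-1}`,
as a binary sequence of length `n`. -/
def charFn (a : Finset ℕ) (n : ℕ) : List Bool :=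
  List.ofFn fun i : Fin n => decide ((i : ℕ) ∈ a)

/-- `U_{(s,A)}`: all restrictions `χ_a^n ↾ k` with `a` finite, `a ⊆ n`,
`s ⊆ a ⊆ s ∪ A` and `k ≤ n`. -/
def MathiasU (s : Finset ℕ) (A : Set ℕ) : Set (List Bool) :=
  {l | ∃ (a : Finset ℕ) (n k : ℕ), k ≤ n ∧ (∀ m ∈ a, m < n) ∧
    (s : Set ℕ) ⊆ (a : Set ℕ) ∧ (a : Set ℕ) ⊆ (s : Set ℕ) ∪ A ∧ l = (charFn a n).take k}

/-!
If `U_{(s,A)} ⊆ U_{(t,B)}`, then for every admissible `a` the full sequence `χ_a^n`, with `n`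
beyond `max (a ∪ t)`, lies in `U_{(t,B)}`, which forces `t ⊆ a ⊆ t ∪ B`. Taking `a = s` gives
`t ⊆ s` and `s ∖ t ⊆ B`; taking `a = s ∪ {x}` for `x ∈ A` gives `x ∈ t ∪ B`, and `x ∉ t ⊆ s`
because `max s < min A`.
-/

@[simp]
lemma charFn_length (a : Finset ℕ) (n : ℕ) : (charFn a n).length = n := by
  simp [charFn]

lemma getElem?_charFn (a : Finset ℕ) {n i : ℕ} (hi : i < n) :
    (charFn a n)[i]? = some (decide (i ∈ a)) := by
  simp [charFn, hi]

lemma mem_iff_mem_of_charFn_eq_take {a a' : Finset ℕ} {n n' k : ℕ}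
    (h : charFn a n = (charFn a' n').take k) {i : ℕ} (hi : i < n) : i ∈ a ↔ i ∈ a' := by
  have hlen : n = min k n' := by simpa using congrArg List.length h
  have hget := congrArg (·[i]?) h
  simp only [List.getElem?_take, getElem?_charFn a hi, getElem?_charFn a' (by omega : i < n'),
    if_pos (by omega : i < k), Option.some.injEq, decide_eq_decide] at hget
  exact hget

lemma charFn_mem_mathiasU {s a : Finset ℕ} {A : Set ℕ} {n : ℕ} (han : ∀ m ∈ a, m < n)
    (hsa : (s : Set ℕ) ⊆ a) (has : (a : Set ℕ) ⊆ s ∪ A) : charFn a n ∈ MathiasU s A :=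
  ⟨a, n, n, le_rfl, han, hsa, has, (List.take_of_length_le (by simp)).symm⟩

lemma MathiasLe.union_subset_union {s t : Finset ℕ} {A B : Set ℕ} (h : MathiasLe s A t B) :
    (s : Set ℕ) ∪ A ⊆ t ∪ B := by
  obtain ⟨-, hAB, hst⟩ := h
  intro x hx
  by_cases hxt : x ∈ (t : Set ℕ)
  · exact Or.inl hxt
  · exact Or.inr (hx.elim (fun hxs => hst ⟨hxs, hxt⟩) (hAB ·))

lemma MathiasLe.mathiasU_subset {s t : Finset ℕ} {A B : Set ℕ} (h : MathiasLe s A t B) :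
    MathiasU s A ⊆ MathiasU t B := by
  rintro l ⟨a, n, k, hk, han, hsa, has, rfl⟩
  exact ⟨a, n, k, hk, han, (Finset.coe_subset.2 h.1).trans hsa,
    has.trans h.union_subset_union, rfl⟩

lemma subset_and_subset_union_of_mathiasU_subset {s t a : Finset ℕ} {A B : Set ℕ}
    (hU : MathiasU s A ⊆ MathiasU t B) (hsa : (s : Set ℕ) ⊆ a) (has : (a : Set ℕ) ⊆ s ∪ A) :
    t ⊆ a ∧ (a : Set ℕ) ⊆ t ∪ B := by
  obtain ⟨n, hn⟩ := (a ∪ t).exists_nat_subset_range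
  have hlt : ∀ m ∈ a ∪ t, m < n := fun m hm => Finset.mem_range.1 (hn hm)
  obtain ⟨a', n', k, -, -, hta', ha'tB, heq⟩ :=
    hU (charFn_mem_mathiasU (fun m hm => hlt m (Finset.mem_union_left _ hm)) hsa has)
  have hagree : ∀ m ∈ a ∪ t, m ∈ a ↔ m ∈ a' := fun m hm =>
    mem_iff_mem_of_charFn_eq_take heq (hlt m hm)
  refine ⟨fun m hm => (hagree m (Finset.mem_union_right _ hm)).2 (hta' hm), fun m hm => ?_⟩
  exact ha'tB ((hagree m (Finset.mem_union_left _ hm)).1 hm)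

theorem mathias_charFn_tree_order_iso_general (s t : Finset ℕ) (A B : Set ℕ)
    (hsA : IsMathiasCond s A) :
    MathiasLe s A t B ↔ MathiasU s A ⊆ MathiasU t B := by
  refine ⟨MathiasLe.mathiasU_subset, fun hU => ?_⟩
  obtain ⟨hts, hstB⟩ := subset_and_subset_union_of_mathiasU_subset (a := s) hU le_rfl
    Set.subset_union_left
  refine ⟨hts, fun x hxA => ?_, fun x ⟨hxs, hxt⟩ => (hstB hxs).resolve_left hxt⟩
  have hxt : x ∉ t := fun hxt => (hsA.2 x (hts hxt) x hxA).false
  obtain ⟨-, hx⟩ := subset_and_subset_union_of_mathiasU_subset (a := insert x s) hU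
    (by simp [Set.subset_insert]) (by simp [Set.insert_subset_iff, hxA])
  exact (hx (by simp)).resolve_left (by simpa using hxt)

/-- `(s,A) ≤ (t,B)` in Mathias forcing iff `U_{(s,A)} ⊆ U_{(t,B)}`. -/
theorem mathias_charFn_tree_order_iso (s t : Finset ℕ) (A B : Set ℕ)
    (hsA : IsMathiasCond s A) (htB : IsMathiasCond t B) :
    MathiasLe s A t B ↔ MathiasU s A ⊆ MathiasU t B :=
  mathias_charFn_tree_order_iso_general s t A B hsA
end

section
/- Let S be a perfect subtree of 2^{<ω}, let Θ_S be the canonical isomorphism between the splitting nodes of S and 2^{<ω}, and let D be a dense subset of Cohen forcing (2^{<ω} ordered by end-extension). Then the set D_S = {t ∈ 𝔸_{𝕊,S} : every terminal node p of t satisfies Θ_S(p) ∈ D} is dense in 𝔸_{𝕊,S}. -/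
def IsTree (T : Set (List Bool)) : Prop :=
  ∀ ⦃l m : List Bool⦄, l <+: m → m ∈ T → l ∈ T

def SplitsAt (T : Set (List Bool)) (l : List Bool) : Prop :=
  l ++ [false] ∈ T ∧ l ++ [true] ∈ T

def PerfectTree (T : Set (List Bool)) : Prop :=
  T.Nonempty ∧ IsTree T ∧ ∀ l ∈ T, ∃ m ∈ T, l <+: m ∧ SplitsAt T m

/-- The splitting nodes of `T`. -/
def splitNodes (T : Set (List Bool)) : Set (List Bool) :=
  {l | l ∈ T ∧ SplitsAt T l}

def FullBin (n : ℕ) : Set (List Bool) := {l | l.length ≤ n}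

def IsoTo (t u : Set (List Bool)) : Prop :=
  ∃ e : t ≃ u, ∀ a b : t, (a : List Bool) <+: (b : List Bool) ↔
    ((e a : List Bool) <+: (e b : List Bool))

/-- The auxiliary forcing `𝔸_{𝕊,S}`: finite subtrees of `S` isomorphic to some `2^{≤n}`. -/
def SacksAux (S : Set (List Bool)) : Set (Set (List Bool)) :=
  {t | t ⊆ S ∧ t.Finite ∧ ∃ n, IsoTo t (FullBin n)}

noncomputable def height (t : Set (List Bool)) : ℕ :=
  sSup (List.length '' t)

/-- End-extension order on `𝔸_{𝕊,S}`. -/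
def EndExt (t s : Set (List Bool)) : Prop :=
  s ⊆ t ∧ ∀ l ∈ t, l.length ≤ height s → l ∈ s

/-- The terminal (maximal) nodes of `t`. -/
def Term (t : Set (List Bool)) : Set (List Bool) :=
  {p | p ∈ t ∧ ∀ q ∈ t, p <+: q → q = p}

/-!
Write `t` as the image of `2^{≤n}` under a prefix-preserving bijection `φ`. Above each leaf
`φ y` of `t` pick a splitting node `q` of `S` longer than every node of `t`, and above each child
`q ++ [i]` a splitting node `c (φ y) i` whose `Θ`-image lies in `D`; such a node exists because
`D` is dense and `Θ⁻¹` preserves prefixes. Sending `y ++ [i]` to `c (φ y) i` extends `φ` to a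
prefix-preserving bijection from `2^{≤n+1}` onto an end-extension `t'` of `t`, and the leaves of
`t'` are exactly the nodes `c (φ y) i`.
-/

lemma mem_fullBin_succ {n : ℕ} {x : List Bool} (hx : x ∈ FullBin (n + 1)) :
    x ∈ FullBin n ∨ ∃ y i, y.length = n ∧ x = y ++ [i] := by
  rcases Nat.lt_or_ge n x.length with h | h
  · obtain ⟨y, i, rfl⟩ := (List.eq_nil_or_concat' x).resolve_left (by rintro rfl; simp at h)
    simp only [FullBin, Set.mem_ofPred_eq, List.length_append, List.length_singleton] at hx h
    exact Or.inr ⟨y, i, by omega, rfl⟩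
  · exact Or.inl h

lemma term_fullBin (n : ℕ) : Term (FullBin n) = {l | l.length = n} := by
  ext l
  refine ⟨fun ⟨hl, hmax⟩ => ?_, fun hl => ⟨hl.le, fun m hm hlm => ?_⟩⟩
  · by_contra hne
    have hext : l ++ [true] ∈ FullBin n := by
      simp only [FullBin, Set.mem_ofPred_eq, List.length_append, List.length_singleton] at hl hne ⊢
      omega
    simpa using hmax _ hext (List.prefix_append l [true])
  · exact (hlm.eq_of_length_le (hl ▸ hm)).symm

lemma IsoTo.exists_eq_image {t u : Set (List Bool)} (h : IsoTo t u) :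
    ∃ φ : List Bool → List Bool, t = φ '' u ∧ ∀ a ∈ u, ∀ b ∈ u, a <+: b ↔ φ a <+: φ b := by
  classical
  obtain ⟨e, he⟩ := h
  set φ : List Bool → List Bool := fun x => if hx : x ∈ u then e.symm ⟨x, hx⟩ else x
  have hφ : ∀ x : u, φ x = e.symm x := fun x => dif_pos x.2
  refine ⟨φ, ?_, fun a ha b hb => ?_⟩
  · ext q
    refine ⟨fun hq => ⟨e ⟨q, hq⟩, (e ⟨q, hq⟩).2, by simp [hφ]⟩, ?_⟩
    rintro ⟨x, hx, rfl⟩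
    exact (hφ ⟨x, hx⟩).symm ▸ (e.symm ⟨x, hx⟩).2
  · simpa [hφ ⟨a, ha⟩, hφ ⟨b, hb⟩] using (he (e.symm ⟨a, ha⟩) (e.symm ⟨b, hb⟩)).symm

section PrefixEmbedding

variable {φ : List Bool → List Bool} {u : Set (List Bool)}

lemma injOn_of_prefix_iff (hφ : ∀ a ∈ u, ∀ b ∈ u, a <+: b ↔ φ a <+: φ b) : u.InjOn φ :=
  fun a ha b hb hab =>
    ((hφ a ha b hb).2 (hab ▸ List.prefix_refl _)).eq_of_length_le
      ((hφ b hb a ha).2 (hab ▸ List.prefix_refl _)).length_le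

lemma isoTo_image (hφ : ∀ a ∈ u, ∀ b ∈ u, a <+: b ↔ φ a <+: φ b) : IsoTo (φ '' u) u := by
  have hinj := injOn_of_prefix_iff hφ
  refine ⟨(hinj.bijOn_image.equiv φ).symm, fun a b => ?_⟩
  set e := hinj.bijOn_image.equiv φ
  have hsymm : ∀ x, φ (e.symm x) = x := fun x => congrArg Subtype.val (e.apply_symm_apply x)
  rw [hφ _ (e.symm a).2 _ (e.symm b).2, hsymm, hsymm]

lemma term_image (hφ : ∀ a ∈ u, ∀ b ∈ u, a <+: b ↔ φ a <+: φ b) :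
    Term (φ '' u) = φ '' Term u := by
  have hinj := injOn_of_prefix_iff hφ
  ext p
  constructor
  · rintro ⟨⟨y, hy, rfl⟩, hmax⟩
    refine ⟨y, ⟨hy, fun q hq hyq => hinj hq hy ?_⟩, rfl⟩
    exact hmax _ ⟨q, hq, rfl⟩ ((hφ y hy q hq).1 hyq)
  · rintro ⟨y, ⟨hy, hmax⟩, rfl⟩
    refine ⟨⟨y, hy, rfl⟩, ?_⟩
    rintro _ ⟨z, hz, rfl⟩ hyz
    rw [hmax z hz ((hφ y hy z hz).2 hyz)]

end PrefixEmbedding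

def graft (φ : List Bool → List Bool) (d : List Bool → Bool → List Bool) (n : ℕ)
    (x : List Bool) : List Bool :=
  if x.length ≤ n then φ x else d x.dropLast (x.getLastD false)

section Graft

variable {φ : List Bool → List Bool} {d : List Bool → Bool → List Bool} {n : ℕ}

lemma graft_of_mem_fullBin {x : List Bool} (hx : x ∈ FullBin n) : graft φ d n x = φ x :=
  if_pos hx

lemma graft_append_singleton {y : List Bool} (hy : y.length = n) (i : Bool) :
    graft φ d n (y ++ [i]) = d y i := by
  simp [graft, hy]

lemma prefix_append_singleton_iff_prefix_leaf
    (hφ : ∀ a ∈ FullBin n, ∀ b ∈ FullBin n, a <+: b ↔ φ a <+: φ b)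
    (hpre : ∀ y, y.length = n → ∀ i, φ y <+: d y i)
    {x y : List Bool} (hx : x ∈ FullBin n) (hy : y.length = n) (j : Bool) :
    x <+: y ++ [j] ↔ φ x <+: d y j := by
  have hyB : y ∈ FullBin n := hy.le
  have hxy : x <+: y ++ [j] ↔ x <+: y := by
    refine List.prefix_concat_iff.trans (or_iff_right fun h => ?_)
    have := congrArg List.length h
    simp only [FullBin, Set.mem_ofPred_eq, List.length_append, List.length_singleton] at hx this
    omega
  rw [hxy, hφ x hx y hyB]
  refine ⟨fun h => h.trans (hpre y hy j), fun h => ?_⟩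
  rcases List.prefix_or_prefix_of_prefix h (hpre y hy j) with h' | h'
  · exact h'
  · have hyx := (hφ y hyB x hx).2 h'
    rw [hyx.eq_of_length_le (hy ▸ hx)]

lemma append_singleton_prefix_append_singleton_iff
    (hφ : ∀ a ∈ FullBin n, ∀ b ∈ FullBin n, a <+: b ↔ φ a <+: φ b)
    (hpre : ∀ y, y.length = n → ∀ i, φ y <+: d y i)
    (hsep : ∀ y, y.length = n → ∀ i j, d y i <+: d y j → i = j)
    {y y' : List Bool} (hy : y.length = n) (hy' : y'.length = n) (i j : Bool) :
    y ++ [i] <+: y' ++ [j] ↔ d y i <+: d y' j := by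
  constructor
  · intro h
    obtain ⟨rfl, hij⟩ := List.append_inj (h.eq_of_length (by simp [hy, hy'])) (by rw [hy, hy'])
    rw [List.singleton_inj.1 hij]
  · intro h
    have hyy' : y = y' := by
      have hB : ∀ z, z.length = n → z ∈ FullBin n := fun z hz => hz.le
      rcases List.prefix_or_prefix_of_prefix ((hpre y hy i).trans h) (hpre y' hy' j) with h' | h'
      · exact ((hφ y (hB y hy) y' (hB y' hy')).2 h').eq_of_length (hy.trans hy'.symm)
      · exact (((hφ y' (hB y' hy') y (hB y hy)).2 h').eq_of_length (hy'.trans hy.symm)).symm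
    subst hyy'
    rw [hsep y hy i j h]

lemma graft_prefix_iff
    (hφ : ∀ a ∈ FullBin n, ∀ b ∈ FullBin n, a <+: b ↔ φ a <+: φ b)
    (hpre : ∀ y, y.length = n → ∀ i, φ y <+: d y i)
    (hlong : ∀ x ∈ FullBin n, ∀ y, y.length = n → ∀ i, (φ x).length < (d y i).length)
    (hsep : ∀ y, y.length = n → ∀ i j, d y i <+: d y j → i = j) :
    ∀ a ∈ FullBin (n + 1), ∀ b ∈ FullBin (n + 1), a <+: b ↔ graft φ d n a <+: graft φ d n b := by
  intro a ha b hb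
  rcases mem_fullBin_succ ha with ha | ⟨y, i, hy, rfl⟩ <;>
    rcases mem_fullBin_succ hb with hb | ⟨y', j, hy', rfl⟩
  · rw [graft_of_mem_fullBin ha, graft_of_mem_fullBin hb]
    exact hφ a ha b hb
  · rw [graft_of_mem_fullBin ha, graft_append_singleton hy']
    exact prefix_append_singleton_iff_prefix_leaf hφ hpre ha hy' j
  · rw [graft_append_singleton hy, graft_of_mem_fullBin hb]
    refine iff_of_false (fun h => ?_) (fun h => (hlong b hb y hy i).not_ge h.length_le)
    have := h.length_le
    simp only [FullBin, Set.mem_ofPred_eq, List.length_append, List.length_singleton] at hb this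
    omega
  · rw [graft_append_singleton hy, graft_append_singleton hy']
    exact append_singleton_prefix_append_singleton_iff hφ hpre hsep hy hy' i j

lemma graft_image_subset {s : Set (List Bool)} (hφ : ∀ x ∈ FullBin n, φ x ∈ s)
    (hd : ∀ y, y.length = n → ∀ i, d y i ∈ s) : graft φ d n '' FullBin (n + 1) ⊆ s := by
  rintro _ ⟨x, hx, rfl⟩
  rcases mem_fullBin_succ hx with hx | ⟨y, i, hy, rfl⟩
  · exact graft_of_mem_fullBin hx ▸ hφ x hx
  · exact graft_append_singleton hy i ▸ hd y hy i

lemma endExt_graft_image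
    (hlong : ∀ y, y.length = n → ∀ i, height (φ '' FullBin n) < (d y i).length) :
    EndExt (graft φ d n '' FullBin (n + 1)) (φ '' FullBin n) := by
  constructor
  · rintro _ ⟨x, hx, rfl⟩
    exact ⟨x, hx.trans n.le_succ, graft_of_mem_fullBin hx⟩
  · rintro _ ⟨x, hx, rfl⟩ hlen
    rcases mem_fullBin_succ hx with hx | ⟨y, i, hy, rfl⟩
    · exact ⟨x, hx, (graft_of_mem_fullBin hx).symm⟩
    · rw [graft_append_singleton hy] at hlen
      exact absurd hlen (hlong y hy i).not_ge

lemma exists_eq_of_mem_term_graft_image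
    (hgraft : ∀ a ∈ FullBin (n + 1), ∀ b ∈ FullBin (n + 1),
      a <+: b ↔ graft φ d n a <+: graft φ d n b)
    {p : List Bool} (hp : p ∈ Term (graft φ d n '' FullBin (n + 1))) :
    ∃ y, y.length = n ∧ ∃ i, d y i = p := by
  rw [term_image hgraft, term_fullBin] at hp
  obtain ⟨x, hx, rfl⟩ := hp
  rcases mem_fullBin_succ (n := n) hx.le with hx' | ⟨y, i, hy, rfl⟩
  · simp only [FullBin, Set.mem_ofPred_eq] at hx hx'
    omega
  · exact ⟨y, hy, i, (graft_append_singleton hy i).symm⟩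

end Graft

lemma length_le_height {t : Set (List Bool)} (ht : t.Finite) {l : List Bool} (hl : l ∈ t) :
    l.length ≤ height t :=
  le_csSup (ht.image _).bddAbove ⟨l, hl, rfl⟩

section PerfectTree

variable {S : Set (List Bool)}

lemma PerfectTree.exists_splitNode_length_ge (hS : PerfectTree S) (N : ℕ) :
    ∀ l ∈ S, ∃ q ∈ splitNodes S, l <+: q ∧ N ≤ q.length := by
  induction N with
  | zero =>
    intro l hl
    obtain ⟨m, hm, hlm, hsplit⟩ := hS.2.2 l hl
    exact ⟨m, ⟨hm, hsplit⟩, hlm, Nat.zero_le _⟩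
  | succ N ih =>
    intro l hl
    obtain ⟨q, hq, hlq, hN⟩ := ih l hl
    obtain ⟨m, hm, hqm, hsplit⟩ := hS.2.2 (q ++ [true]) hq.2.2
    refine ⟨m, ⟨hm, hsplit⟩, hlq.trans ((List.prefix_append q [true]).trans hqm), ?_⟩
    have := hqm.length_le
    simp only [List.length_append, List.length_singleton] at this
    omega

variable {Θ : List Bool → List Bool} {D : Set (List Bool)}

lemma PerfectTree.exists_splitNode_image_mem (hS : PerfectTree S)
    (hsurj : Set.SurjOn Θ (splitNodes S) Set.univ)
    (hmono : ∀ a ∈ splitNodes S, ∀ b ∈ splitNodes S, Θ a <+: Θ b → a <+: b)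
    (hD : ∀ a : List Bool, ∃ b ∈ D, a <+: b) {q : List Bool} (hq : q ∈ S) :
    ∃ c ∈ splitNodes S, Θ c ∈ D ∧ q <+: c := by
  obtain ⟨r, hr, hqr, hsplit⟩ := hS.2.2 q hq
  obtain ⟨b, hb, hrb⟩ := hD (Θ r)
  obtain ⟨c, hc, rfl⟩ := hsurj (Set.mem_univ b)
  exact ⟨c, hc, hb, hqr.trans (hmono r ⟨hr, hsplit⟩ c hc hrb)⟩

lemma PerfectTree.exists_splitNode_pair (hS : PerfectTree S)
    (hsurj : Set.SurjOn Θ (splitNodes S) Set.univ)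
    (hmono : ∀ a ∈ splitNodes S, ∀ b ∈ splitNodes S, Θ a <+: Θ b → a <+: b)
    (hD : ∀ a : List Bool, ∃ b ∈ D, a <+: b) (N : ℕ) {p : List Bool} (hp : p ∈ S) :
    ∃ c : Bool → List Bool, (∀ i, c i ∈ S) ∧ (∀ i, Θ (c i) ∈ D) ∧ (∀ i, p <+: c i) ∧
      (∀ i, N < (c i).length) ∧ ∀ i j, c i <+: c j → i = j := by
  obtain ⟨q, ⟨-, hqf, hqt⟩, hpq, hN⟩ := hS.exists_splitNode_length_ge N p hp
  have hchild : ∀ i : Bool, q ++ [i] ∈ S := fun i => by cases i <;> assumption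
  choose c hc hcD hqc using fun i => hS.exists_splitNode_image_mem hsurj hmono hD (hchild i)
  refine ⟨c, fun i => (hc i).1, hcD, fun i => hpq.trans ((q.prefix_append [i]).trans (hqc i)),
    fun i => ?_, fun i j hij => ?_⟩
  · have := (hqc i).length_le
    simp only [List.length_append, List.length_singleton] at this
    omega
  · rcases List.prefix_or_prefix_of_prefix ((hqc i).trans hij) (hqc j) with h | h
    · simpa using h.eq_of_length (by simp)
    · simpa using (h.eq_of_length (by simp)).symm

end PerfectTree

/-- Let `Θ` be the canonical isomorphism from the splitting nodes of the perfect
tree `S` onto `2^{<ω}` and `D` a dense subset of Cohen forcing. Then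
`D_S = {t ∈ 𝔸_{𝕊,S} : ∀ p ∈ Term t, Θ p ∈ D}` is dense in `𝔸_{𝕊,S}`. -/
theorem sacksAux_dense_from_cohen_dense (S : Set (List Bool)) (hS : PerfectTree S)
    (Θ : List Bool → List Bool)
    (hbij : Set.BijOn Θ (splitNodes S) Set.univ)
    (hord : ∀ a ∈ splitNodes S, ∀ b ∈ splitNodes S, (a <+: b ↔ Θ a <+: Θ b))
    (D : Set (List Bool)) (hD : ∀ a : List Bool, ∃ b ∈ D, a <+: b) :
    ∀ t ∈ SacksAux S, ∃ t' ∈ SacksAux S, EndExt t' t ∧ ∀ p ∈ Term t', Θ p ∈ D := by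
  rintro t ⟨htS, htF, n, hiso⟩
  obtain ⟨φ, rfl, hφ⟩ := hiso.exists_eq_image
  choose! c hcS hcD hpre hlong hsep using fun p (hp : p ∈ S) =>
    hS.exists_splitNode_pair hbij.surjOn (fun a ha b hb => (hord a ha b hb).2) hD
      (height (φ '' FullBin n)) hp
  have hφS : ∀ x ∈ FullBin n, φ x ∈ S := fun x hx => htS ⟨x, hx, rfl⟩
  have hleaf : ∀ y : List Bool, y.length = n → φ y ∈ S := fun y hy => hφS y hy.le
  have hgraft := graft_prefix_iff (d := fun y => c (φ y)) hφ
    (fun y hy => hpre _ (hleaf y hy))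
    (fun x hx y hy i => (length_le_height htF ⟨x, hx, rfl⟩).trans_lt (hlong _ (hleaf y hy) i))
    (fun y hy => hsep _ (hleaf y hy))
  refine ⟨graft φ (fun y => c (φ y)) n '' FullBin (n + 1),
    ⟨graft_image_subset hφS (fun y hy => hcS _ (hleaf y hy)),
      (List.finite_length_le Bool (n + 1)).image _, n + 1, isoTo_image hgraft⟩,
    endExt_graft_image (fun y hy => hlong _ (hleaf y hy)), fun p hp => ?_⟩
  obtain ⟨y, hy, i, rfl⟩ := exists_eq_of_mem_term_graft_image hgraft hp
  exact hcD _ (hleaf y hy) i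
end

section
/- Let T ⊆ 2^{<ω} be a uniform perfect tree and let 𝔸_{𝕍,T} be the partial order of finite uniform subtrees of T, where s ≤ t iff height(s) ≥ height(t) and s restricted to height(t) equals t. If D is an open dense subset of Cohen forcing 2^{<ω}, then D_T = {t ∈ 𝔸_{𝕍,T} : Term(Θ_T(t)) ⊆ D} is dense in 𝔸_{𝕍,T}, where Θ_T is the canonical isomorphism between the splitting points of T and 2^{<ω}. -/
/-- A set of binary sequences is uniform if nodes of equal length have the same
immediate successor directions in it. -/
def UniformIn (T : Set (List Bool)) : Prop :=
  ∀ l ∈ T, ∀ m ∈ T, l.length = m.length → ∀ b : Bool, (l ++ [b] ∈ T ↔ m ++ [b] ∈ T)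

/-- A uniform (Silver) tree: a uniform perfect tree. -/
def UniformTree (T : Set (List Bool)) : Prop :=
  PerfectTree T ∧ UniformIn T

/-- A condition of the auxiliary Silver forcing `𝔸_{𝕍,T}`: a finite nonempty
uniform subtree of `T`, all of whose maximal branches have the same height. -/
def SilverAuxCond (T : Set (List Bool)) (t : Set (List Bool)) : Prop :=
  t ⊆ T ∧ t.Finite ∧ t.Nonempty ∧ IsTree t ∧ UniformIn t ∧
    ∀ p ∈ t, ∀ q ∈ t, (∀ r ∈ t, p <+: r → r = p) → (∀ r ∈ t, q <+: r → r = q) →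
      p.length = q.length

/-- The order of `𝔸_{𝕍,T}`: `s ≤ t` iff `height s ≥ height t` and the restriction
of `s` to the height of `t` equals `t`. -/
def SilverLe (s t : Set (List Bool)) : Prop :=
  height t ≤ height s ∧ {l | l ∈ s ∧ l.length ≤ height t} = t

/-- The maximal splitting nodes (of `T`) belonging to `t`; their `Θ_T`-images are
the terminal nodes of the image tree `Θ_T(t)`. -/
def MaxSplit (T t : Set (List Bool)) : Set (List Bool) :=
  {p | p ∈ t ∧ p ∈ splitNodes T ∧
    ∀ q ∈ t, q ∈ splitNodes T → p <+: q → q = p}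

/-!
To extend a condition `t` of height `h` along a tail `c`, append `c` above every node of `t`
of length `h`. By uniformity of `T` the result lies in `T`, and has splitting top nodes, as soon
as this holds above one top node. One such extension makes all top nodes splitting nodes of `T`.
Then, while some top node `r` has `Θ r ∉ D`, choose `d ∈ D` above `Θ r` and write `Θ⁻¹ d = r ++ c`;
extending along `c` sends the new top node `r ++ c` into `D`, while the other top nodes that were
already sent into `D` stay there because `Θ` is monotone and `D` is open. Hence the number of bad
top nodes strictly decreases.
-/

section UniformTree

variable {T : Set (List Bool)}

theorem append_mem_of_length_eq (htree : IsTree T) (hunif : UniformIn T) (c : List Bool) :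
    ∀ {l m : List Bool}, l ∈ T → m ∈ T → l.length = m.length → l ++ c ∈ T → m ++ c ∈ T := by
  induction c using List.reverseRecOn with
  | nil => intro l m _ hm _ _; simpa using hm
  | append_singleton d b ih =>
    intro l m hl hm hlen h
    rw [← List.append_assoc] at h ⊢
    have hld : l ++ d ∈ T := htree (List.prefix_append _ _) h
    exact (hunif _ hld _ (ih hl hm hlen hld) (by simp [hlen]) b).mp h

theorem mem_splitNodes_of_length_eq (hunif : UniformIn T) {l m : List Bool}
    (hl : l ∈ splitNodes T) (hm : m ∈ T) (hlen : l.length = m.length) : m ∈ splitNodes T :=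
  ⟨hm, (hunif l hl.1 m hm hlen false).mp hl.2.1, (hunif l hl.1 m hm hlen true).mp hl.2.2⟩

end UniformTree

section Height

variable {T t s u : Set (List Bool)} {l p : List Bool}

theorem height_eq_of_forall_length_le {n : ℕ} (hl : l ∈ t) (hln : l.length = n)
    (h : ∀ m ∈ t, m.length ≤ n) : height t = n :=
  IsGreatest.csSup_eq ⟨⟨l, hl, hln⟩, by rintro _ ⟨m, hm, rfl⟩; exact h m hm⟩

theorem length_le_height_s7 (hf : t.Finite) (hp : p ∈ t) : p.length ≤ height t :=
  le_csSup (hf.image _).bddAbove ⟨p, hp, rfl⟩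

def topNodes (t : Set (List Bool)) : Set (List Bool) :=
  {p | p ∈ t ∧ p.length = height t}

theorem topNodes_finite (hf : t.Finite) : (topNodes t).Finite :=
  hf.subset fun _ hp => hp.1

theorem topNodes_nonempty (hf : t.Finite) (hn : t.Nonempty) : (topNodes t).Nonempty :=
  (hn.image List.length).csSup_mem (hf.image _)

theorem eq_of_mem_topNodes_of_prefix (hf : t.Finite) (hp : p ∈ topNodes t) (hl : l ∈ t)
    (hpl : p <+: l) : l = p :=
  (hpl.eq_of_length_le (hp.2 ▸ length_le_height_s7 hf hl)).symm

theorem SilverAuxCond.exists_mem_topNodes_prefix (ht : SilverAuxCond T t) (hp : p ∈ t) :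
    ∃ m ∈ topNodes t, p <+: m := by
  obtain ⟨-, hf, hn, -, -, hterm⟩ := ht
  obtain ⟨r, hr⟩ := topNodes_nonempty hf hn
  obtain ⟨m, ⟨hm, hpm⟩, hmax⟩ := Set.Finite.exists_maximalFor List.length
    {q | q ∈ t ∧ p <+: q} (hf.subset fun _ hq => hq.1) ⟨p, hp, List.prefix_refl p⟩
  have hm_max : ∀ q ∈ t, m <+: q → q = m := fun q hq hmq =>
    (hmq.eq_of_length_le (hmax ⟨hq, hpm.trans hmq⟩ hmq.length_le)).symm
  have hm_len := hterm m hm r hr.1 hm_max fun q hq => eq_of_mem_topNodes_of_prefix hf hr hq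
  exact ⟨m, ⟨hm, hm_len.trans hr.2⟩, hpm⟩

theorem maxSplit_eq_topNodes (ht : SilverAuxCond T t) (hsplit : topNodes t ⊆ splitNodes T) :
    MaxSplit T t = topNodes t := by
  ext p
  constructor
  · rintro ⟨hp, -, hpmax⟩
    obtain ⟨m, hm, hpm⟩ := ht.exists_mem_topNodes_prefix hp
    rwa [← hpmax m hm.1 (hsplit hm) hpm]
  · intro hp
    exact ⟨hp.1, hsplit hp, fun q hq _ hpq => eq_of_mem_topNodes_of_prefix ht.2.1 hp hq hpq⟩

theorem silverLe_refl (hf : t.Finite) : SilverLe t t :=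
  ⟨le_rfl, Set.ext fun _ => ⟨fun h => h.1, fun h => ⟨h, length_le_height_s7 hf h⟩⟩⟩

theorem SilverLe.trans (h₁ : SilverLe u s) (h₂ : SilverLe s t) : SilverLe u t := by
  refine ⟨h₂.1.trans h₁.1, Set.ext fun l => ?_⟩
  have h₁l := Set.ext_iff.mp h₁.2 l
  have h₂l := Set.ext_iff.mp h₂.2 l
  simp only [Set.mem_ofPred_eq] at h₁l h₂l ⊢
  rw [← h₂l, ← h₁l]
  exact ⟨fun h => ⟨⟨h.1, h.2.trans h₂.1⟩, h.2⟩, fun h => ⟨h.1.1, h.2⟩⟩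

end Height

section Extension

variable {T t : Set (List Bool)} {c d l p r : List Bool}

def extendAlong (t : Set (List Bool)) (c : List Bool) : Set (List Bool) :=
  {l | l.take (height t) ∈ t ∧ l.drop (height t) <+: c}

theorem mem_extendAlong_of_mem (hf : t.Finite) (hl : l ∈ t) : l ∈ extendAlong t c := by
  have hlen := length_le_height_s7 hf hl
  exact ⟨by rwa [List.take_of_length_le hlen], by simp [List.drop_eq_nil_of_le hlen]⟩

theorem mem_of_mem_extendAlong (hl : l ∈ extendAlong t c) (hlen : l.length ≤ height t) :
    l ∈ t := by
  simpa [List.take_of_length_le hlen] using hl.1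

theorem append_mem_extendAlong (hp : p ∈ topNodes t) (hd : d <+: c) :
    p ++ d ∈ extendAlong t c := by
  rw [extendAlong, Set.mem_ofPred_eq, ← hp.2, List.take_left, List.drop_left]
  exact ⟨hp.1, hd⟩

theorem take_mem_topNodes_of_mem_extendAlong (hl : l ∈ extendAlong t c)
    (hlen : height t ≤ l.length) : l.take (height t) ∈ topNodes t :=
  ⟨hl.1, by simp [hlen]⟩

theorem length_le_of_mem_extendAlong (hl : l ∈ extendAlong t c) :
    l.length ≤ height t + c.length := by
  have := hl.2.length_le
  simp only [List.length_drop] at this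
  omega

theorem extendAlong_finite : (extendAlong t c).Finite :=
  (List.finite_length_le Bool (height t + c.length)).subset
    fun _ => length_le_of_mem_extendAlong

theorem height_extendAlong (hf : t.Finite) (hn : t.Nonempty) :
    height (extendAlong t c) = height t + c.length := by
  obtain ⟨r, hr⟩ := topNodes_nonempty hf hn
  exact height_eq_of_forall_length_le (append_mem_extendAlong hr (List.prefix_refl c))
    (by simp [hr.2]) fun _ => length_le_of_mem_extendAlong

theorem topNodes_extendAlong (hf : t.Finite) (hn : t.Nonempty) :
    topNodes (extendAlong t c) = (· ++ c) '' topNodes t := by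
  ext l
  rw [topNodes, Set.mem_ofPred_eq, height_extendAlong hf hn]
  constructor
  · rintro ⟨hl, hlen⟩
    have hdrop : l.drop (height t) = c := hl.2.eq_of_length (by simp [hlen])
    refine ⟨_, take_mem_topNodes_of_mem_extendAlong hl (by omega), ?_⟩
    simp only [← hdrop, List.take_append_drop]
  · rintro ⟨p, hp, rfl⟩
    exact ⟨append_mem_extendAlong hp (List.prefix_refl c), by simp [hp.2]⟩

theorem isTree_extendAlong (htree : IsTree t) : IsTree (extendAlong t c) :=
  fun _ _ hlm hm => ⟨htree (hlm.take _) hm.1, (hlm.drop _).trans hm.2⟩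

theorem uniformIn_extendAlong (hf : t.Finite) (hunif : UniformIn t) :
    UniformIn (extendAlong t c) := by
  suffices key : ∀ l ∈ extendAlong t c, ∀ m ∈ extendAlong t c, l.length = m.length →
      ∀ b : Bool, l ++ [b] ∈ extendAlong t c → m ++ [b] ∈ extendAlong t c from
    fun l hl m hm hlen b => ⟨key l hl m hm hlen b, key m hm l hl hlen.symm b⟩
  intro l hl m hm hlen b hlb
  rcases lt_or_ge l.length (height t) with hlt | hge
  · have hlb' : l ++ [b] ∈ t := mem_of_mem_extendAlong hlb (by simp; omega)
    exact mem_extendAlong_of_mem hf <| (hunif l (mem_of_mem_extendAlong hl hlt.le) m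
      (mem_of_mem_extendAlong hm (by omega)) hlen b).mp hlb'
  · have hdrop : l.drop (height t) = m.drop (height t) :=
      (List.prefix_of_prefix_length_le hl.2 hm.2 (by simp [hlen])).eq_of_length (by simp [hlen])
    refine ⟨by rw [List.take_append_of_le_length (hlen ▸ hge)]; exact hm.1, ?_⟩
    rw [List.drop_append_of_le_length (hlen ▸ hge), ← hdrop, ← List.drop_append_of_le_length hge]
    exact hlb.2

theorem extendAlong_subset (htree : IsTree T) (hsub : t ⊆ T)
    (hc : ∀ p ∈ topNodes t, p ++ c ∈ T) : extendAlong t c ⊆ T := by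
  intro l hl
  rcases le_or_gt l.length (height t) with hle | hgt
  · exact hsub (mem_of_mem_extendAlong hl hle)
  · rw [← List.take_append_drop (height t) l]
    exact htree ((List.prefix_append_right_inj _).mpr hl.2)
      (hc _ (take_mem_topNodes_of_mem_extendAlong hl hgt.le))

theorem SilverAuxCond.exists_mem_topNodes_extendAlong_prefix (ht : SilverAuxCond T t)
    (hl : l ∈ extendAlong t c) : ∃ m ∈ topNodes (extendAlong t c), l <+: m := by
  rw [topNodes_extendAlong ht.2.1 ht.2.2.1]
  rcases le_or_gt l.length (height t) with hle | hgt
  · obtain ⟨m, hm, hlm⟩ := ht.exists_mem_topNodes_prefix (mem_of_mem_extendAlong hl hle)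
    exact ⟨m ++ c, ⟨m, hm, rfl⟩, hlm.trans (List.prefix_append m c)⟩
  · refine ⟨_, ⟨_, take_mem_topNodes_of_mem_extendAlong hl hgt.le, rfl⟩, ?_⟩
    conv_lhs => rw [← List.take_append_drop (height t) l]
    exact (List.prefix_append_right_inj _).mpr hl.2

theorem silverAuxCond_extendAlong (htree : IsTree T) (ht : SilverAuxCond T t)
    (hc : ∀ p ∈ topNodes t, p ++ c ∈ T) : SilverAuxCond T (extendAlong t c) := by
  have hterm : ∀ p ∈ extendAlong t c, (∀ r ∈ extendAlong t c, p <+: r → r = p) →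
      p.length = height (extendAlong t c) := fun p hp hmax => by
    obtain ⟨m, hm, hpm⟩ := ht.exists_mem_topNodes_extendAlong_prefix hp
    rw [← hmax m hm.1 hpm]
    exact hm.2
  obtain ⟨hsub, hf, hn, htreet, hunif, -⟩ := ht
  exact ⟨extendAlong_subset htree hsub hc, extendAlong_finite,
    hn.mono fun _ => mem_extendAlong_of_mem hf, isTree_extendAlong htreet,
    uniformIn_extendAlong hf hunif,
    fun p hp q hq hpm hqm => (hterm p hp hpm).trans (hterm q hq hqm).symm⟩

theorem silverLe_extendAlong (hf : t.Finite) (hn : t.Nonempty) :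
    SilverLe (extendAlong t c) t :=
  ⟨by rw [height_extendAlong hf hn]; exact Nat.le_add_right _ _,
    Set.ext fun _ => ⟨fun hl => mem_of_mem_extendAlong hl.1 hl.2,
      fun hl => ⟨mem_extendAlong_of_mem hf hl, length_le_height_s7 hf hl⟩⟩⟩

theorem extendAlong_of_append_mem_splitNodes (htree : IsTree T) (hunif : UniformIn T)
    (ht : SilverAuxCond T t) (hr : r ∈ topNodes t) (hrc : r ++ c ∈ splitNodes T) :
    SilverAuxCond T (extendAlong t c) ∧ SilverLe (extendAlong t c) t ∧
      topNodes (extendAlong t c) ⊆ splitNodes T := by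
  have hc : ∀ p ∈ topNodes t, p ++ c ∈ T := fun p hp =>
    append_mem_of_length_eq htree hunif c (ht.1 hr.1) (ht.1 hp.1) (hr.2.trans hp.2.symm) hrc.1
  refine ⟨silverAuxCond_extendAlong htree ht hc, silverLe_extendAlong ht.2.1 ht.2.2.1, ?_⟩
  rw [topNodes_extendAlong ht.2.1 ht.2.2.1]
  rintro _ ⟨p, hp, rfl⟩
  exact mem_splitNodes_of_length_eq hunif hrc (hc p hp) (by simp [hr.2, hp.2])

theorem exists_le_topNodes_subset_splitNodes (hT : UniformTree T) (ht : SilverAuxCond T t) :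
    ∃ s, SilverAuxCond T s ∧ SilverLe s t ∧ topNodes s ⊆ splitNodes T := by
  obtain ⟨r, hr⟩ := topNodes_nonempty ht.2.1 ht.2.2.1
  obtain ⟨_, hmT, ⟨c, rfl⟩, hsplit⟩ := hT.1.2.2 r (ht.1 hr.1)
  exact ⟨_, extendAlong_of_append_mem_splitNodes hT.1.2.1 hT.2 ht hr ⟨hmT, hsplit⟩⟩

end Extension

section Cohen

variable {T t : Set (List Bool)} {Θ : List Bool → List Bool} {D : Set (List Bool)}

theorem ncard_topNodes_extendAlong_diff_lt
    (hmono : ∀ a ∈ splitNodes T, ∀ b ∈ splitNodes T, a <+: b → Θ a <+: Θ b)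
    (hDopen : ∀ a ∈ D, ∀ b : List Bool, a <+: b → b ∈ D)
    (hf : t.Finite) (hn : t.Nonempty) {c r : List Bool} (hsplit : topNodes t ⊆ splitNodes T)
    (hsplit' : topNodes (extendAlong t c) ⊆ splitNodes T)
    (hr : r ∈ topNodes t \ Θ ⁻¹' D) (hrc : Θ (r ++ c) ∈ D) :
    (topNodes (extendAlong t c) \ Θ ⁻¹' D).ncard < (topNodes t \ Θ ⁻¹' D).ncard := by
  have hfin : (topNodes t \ Θ ⁻¹' D).Finite := (topNodes_finite hf).sdiff
  have hsub : topNodes (extendAlong t c) \ Θ ⁻¹' D ⊆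
      (· ++ c) '' ((topNodes t \ Θ ⁻¹' D) \ {r}) := by
    rintro _ ⟨hpc, hpcD⟩
    rw [topNodes_extendAlong hf hn] at hsplit'
    obtain ⟨p, hp, rfl⟩ := topNodes_extendAlong hf hn ▸ hpc
    refine ⟨p, ⟨⟨hp, fun hpD => hpcD ?_⟩, fun hpr => hpcD (hpr ▸ hrc)⟩, rfl⟩
    exact hDopen _ hpD _ (hmono _ (hsplit hp) _ (hsplit' ⟨p, hp, rfl⟩) (List.prefix_append p c))
  calc _ ≤ _ := Set.ncard_le_ncard hsub (hfin.sdiff.image _)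
    _ ≤ _ := Set.ncard_image_le hfin.sdiff
    _ < _ := Set.ncard_sdiff_singleton_lt_of_mem hr hfin

theorem exists_le_topNodes_subset_preimage (htree : IsTree T) (hunif : UniformIn T)
    (hsurj : Set.SurjOn Θ (splitNodes T) Set.univ)
    (hord : ∀ a ∈ splitNodes T, ∀ b ∈ splitNodes T, (a <+: b ↔ Θ a <+: Θ b))
    (hDdense : ∀ a : List Bool, ∃ b ∈ D, a <+: b)
    (hDopen : ∀ a ∈ D, ∀ b : List Bool, a <+: b → b ∈ D)
    (ht : SilverAuxCond T t) (hsplit : topNodes t ⊆ splitNodes T) :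
    ∃ s, SilverAuxCond T s ∧ SilverLe s t ∧ topNodes s ⊆ splitNodes T ∧
      topNodes s ⊆ Θ ⁻¹' D := by
  induction hn : (topNodes t \ Θ ⁻¹' D).ncard using Nat.strong_induction_on generalizing t with
  | _ n ih =>
  obtain hgood | ⟨r, hr⟩ := (topNodes t \ Θ ⁻¹' D).eq_empty_or_nonempty
  · exact ⟨t, ht, silverLe_refl ht.2.1, hsplit, Set.sdiff_eq_empty.mp hgood⟩
  obtain ⟨d, hdD, hrd⟩ := hDdense (Θ r)
  obtain ⟨q, hq, rfl⟩ := hsurj (Set.mem_univ d)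
  obtain ⟨c, rfl⟩ := (hord r (hsplit hr.1) _ hq).mpr hrd
  obtain ⟨ht', hle, hsplit'⟩ := extendAlong_of_append_mem_splitNodes htree hunif ht hr.1 hq
  have hlt := ncard_topNodes_extendAlong_diff_lt (fun a ha b hb => (hord a ha b hb).mp) hDopen
    ht.2.1 ht.2.2.1 hsplit hsplit' hr hdD
  obtain ⟨s, hs, hs_le, hs_split, hs_good⟩ := ih _ (hn ▸ hlt) ht' hsplit' rfl
  exact ⟨s, hs, hs_le.trans hle, hs_split, hs_good⟩

end Cohen

/-- Let `T` be a uniform perfect tree, `Θ` the canonical isomorphism between the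
splitting points of `T` and `2^{<ω}`, and `D` an open dense subset of Cohen forcing.
Then `D_T = {t ∈ 𝔸_{𝕍,T} : Term(Θ_T(t)) ⊆ D}` is dense in `𝔸_{𝕍,T}`. -/
theorem silverAux_dense_from_cohen_open_dense (T : Set (List Bool)) (hT : UniformTree T)
    (Θ : List Bool → List Bool)
    (hbij : Set.BijOn Θ (splitNodes T) Set.univ)
    (hord : ∀ a ∈ splitNodes T, ∀ b ∈ splitNodes T, (a <+: b ↔ Θ a <+: Θ b))
    (D : Set (List Bool))
    (hDdense : ∀ a : List Bool, ∃ b ∈ D, a <+: b)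
    (hDopen : ∀ a ∈ D, ∀ b : List Bool, a <+: b → b ∈ D) :
    ∀ t, SilverAuxCond T t →
      ∃ t', SilverAuxCond T t' ∧ SilverLe t' t ∧ ∀ p ∈ MaxSplit T t', Θ p ∈ D := by
  intro t ht
  obtain ⟨s, hs, hst, hsplit⟩ := exists_le_topNodes_subset_splitNodes hT ht
  obtain ⟨u, hu, hus, husplit, hgood⟩ :=
    exists_le_topNodes_subset_preimage hT.1.2.1 hT.2 hbij.surjOn hord hDdense hDopen hs hsplit
  refine ⟨u, hu, hus.trans hst, fun p hp => hgood ?_⟩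
  rwa [maxSplit_eq_topNodes hu husplit] at hp
end
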